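/- arXiv:1111.1432 — 5 statements merged into one kernel-verified Lean document; each statement's English description precedes it below -/
import Mathlib

section
/- There exists a sequence ε_k → 0 such that for every k ≥ 1 and every binary string x of length 2^k, the number of distinct strings in the dyadic substring set S(x) is at most 2^k(2+ε_k)/k. (Liaw–Lin bound on the size of the quasi-reduced OBDD.) -/
/-!
Level `i` of `S(x)` has at most `min (2^(k-i)) (2^(2^i))` elements: there are `2^(k-i)` blocks,
and only `2^(2^i)` binary words of length `2^i`. Splitting the levels at `j` bounds `|S(x)|` by
`2^(2^j+1) + 2^(k-j)`. Taking `2^j` to be the power of two in `(n/2, n]` with `n = k+1-√k`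
makes the first term `O(2^k/2^√k)` and the second at most `2·2^k/n = (2 + O(1/√k))·2^k/k`.
-/

/-- The dyadic substring set `S(x)` of a binary string `x` of length `2^k`. -/
def dyadicSet (k : ℕ) (x : List Bool) : Finset (List Bool) :=
  (Finset.range (k + 1)).biUnion fun i =>
    (Finset.range (2 ^ (k - i))).image fun j => (x.drop (j * 2 ^ i)).take (2 ^ i)

open Finset Filter Topology

theorem sum_pow_lt_pow_of_injOn {ι : Type*} {s : Finset ι} {g : ι → ℕ} {b m : ℕ}
    (hb : 2 ≤ b) (hg : Set.InjOn g s) (hlt : ∀ i ∈ s, g i < m) : ∑ i ∈ s, b ^ g i < b ^ m := by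
  classical
  rw [← sum_image hg]
  exact Nat.geomSum_lt hb (by simpa using hlt)

theorem card_le_pow_of_forall_length_eq {α : Type*} [Fintype α] {s : Finset (List α)} {L : ℕ}
    (h : ∀ l ∈ s, l.length = L) : #s ≤ Fintype.card α ^ L := by
  classical
  calc #s ≤ #(univ.image fun v : List.Vector α L => v.toList) :=
        card_le_card fun l hl => mem_image.2 ⟨⟨l, h l hl⟩, mem_univ _, rfl⟩
    _ ≤ Fintype.card α ^ L := card_image_le.trans (by simp)

def dyadicLevel (k i : ℕ) (x : List Bool) : Finset (List Bool) :=
  (range (2 ^ (k - i))).image fun j => (x.drop (j * 2 ^ i)).take (2 ^ i)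

theorem card_dyadicLevel_le {k i : ℕ} {x : List Bool} (hx : x.length = 2 ^ k) (hi : i ≤ k) :
    #(dyadicLevel k i x) ≤ min (2 ^ (k - i)) (2 ^ 2 ^ i) := by
  refine le_min (card_image_le.trans (card_range _).le) ?_
  simpa using card_le_pow_of_forall_length_eq (α := Bool) fun l hl => by
    obtain ⟨j, hj, rfl⟩ := mem_image.1 hl
    have hblock : j * 2 ^ i + 2 ^ i ≤ 2 ^ k := by
      calc j * 2 ^ i + 2 ^ i = (j + 1) * 2 ^ i := by ring
        _ ≤ 2 ^ (k - i) * 2 ^ i := Nat.mul_le_mul_right _ (mem_range.1 hj)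
        _ = 2 ^ k := by rw [← pow_add, Nat.sub_add_cancel hi]
    simp only [List.length_take, List.length_drop, hx]
    omega

def dyadicSetBound (k : ℕ) : ℕ := ∑ i ∈ range (k + 1), min (2 ^ (k - i)) (2 ^ 2 ^ i)

theorem card_dyadicSet_le {k : ℕ} {x : List Bool} (hx : x.length = 2 ^ k) :
    #(dyadicSet k x) ≤ dyadicSetBound k :=
  card_biUnion_le.trans <| sum_le_sum fun _ hi =>
    card_dyadicLevel_le hx (Nat.lt_succ_iff.1 (mem_range.1 hi))

theorem dyadicSetBound_le (k j : ℕ) : dyadicSetBound k ≤ 2 ^ (2 ^ j + 1) + 2 ^ (k - j) := by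
  rw [dyadicSetBound, ← sum_filter_add_sum_filter_not _ (· ≤ j)]
  gcongr
  · refine (sum_le_sum fun i _ => min_le_right _ _).trans
      (sum_pow_lt_pow_of_injOn le_rfl (Nat.pow_right_injective le_rfl).injOn fun i hi => ?_).le
    have := Nat.pow_le_pow_right two_pos (mem_filter.1 hi).2
    omega
  · refine (sum_le_sum fun i _ => min_le_left _ _).trans
      (sum_pow_lt_pow_of_injOn le_rfl (fun a ha b hb hab => ?_) fun i hi => ?_).le
    · simp only [coe_filter, mem_range, Set.mem_ofPred_eq] at ha hb
      omega
    · simp only [mem_filter, mem_range] at hi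
      omega

theorem mul_dyadicSetBound_le {k n : ℕ} (hn : 1 ≤ n) (hnk : n ≤ k) :
    n * dyadicSetBound k ≤ 2 * (n * 2 ^ n + 2 ^ k) := by
  set j := Nat.log 2 n
  have hjn : 2 ^ j ≤ n := Nat.pow_log_le_self 2 (by omega)
  have hnj : n < 2 ^ (j + 1) := Nat.lt_pow_succ_log_self one_lt_two n
  have hjk : j ≤ k := (Nat.lt_two_pow_self.trans_le hjn).le.trans hnk
  have low : 2 ^ (2 ^ j + 1) ≤ 2 * 2 ^ n := by
    rw [pow_succ']
    gcongr
    exact one_le_two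
  have high : n * 2 ^ (k - j) ≤ 2 * 2 ^ k := by
    calc n * 2 ^ (k - j) ≤ 2 ^ (j + 1) * 2 ^ (k - j) := Nat.mul_le_mul_right _ hnj.le
      _ = 2 * 2 ^ k := by rw [← pow_add, ← pow_succ']; congr 1; omega
  calc n * dyadicSetBound k ≤ n * (2 ^ (2 ^ j + 1) + 2 ^ (k - j)) :=
        Nat.mul_le_mul_left _ (dyadicSetBound_le k j)
    _ ≤ n * (2 * 2 ^ n) + 2 * 2 ^ k := by rw [mul_add]; gcongr
    _ = 2 * (n * 2 ^ n + 2 ^ k) := by ring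

noncomputable def liawLinError (k : ℕ) : ℝ :=
  12 * (Nat.sqrt k : ℝ) ^ 2 / 2 ^ Nat.sqrt k + 2 / Nat.sqrt k

theorem tendsto_nat_sqrt_atTop : Tendsto Nat.sqrt atTop atTop :=
  tendsto_atTop_atTop.2 fun b => ⟨b * b, fun _ hk => Nat.le_sqrt.2 hk⟩

theorem tendsto_liawLinError : Tendsto liawLinError atTop (𝓝 0) := by
  have h : Tendsto (fun s : ℕ => 12 * (s : ℝ) ^ 2 / 2 ^ s + 2 / s) atTop (𝓝 0) := by
    simpa [mul_div_assoc] using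
      ((tendsto_pow_const_div_const_pow_of_one_lt 2 one_lt_two).const_mul 12).add
        (tendsto_const_div_atTop_nhds_zero_nat 2)
  exact h.comp tendsto_nat_sqrt_atTop

theorem dyadicSetBound_le_liawLin {k : ℕ} (hk : 1 ≤ k) :
    (dyadicSetBound k : ℝ) ≤ 2 ^ k * (2 + liawLinError k) / k := by
  have hs : 1 ≤ Nat.sqrt k := Nat.sqrt_pos.2 hk
  have hsk : Nat.sqrt k * Nat.sqrt k ≤ k := Nat.sqrt_le k
  have hks : k < (Nat.sqrt k + 1) * (Nat.sqrt k + 1) := Nat.lt_succ_sqrt k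
  rw [liawLinError]
  generalize Nat.sqrt k = s at *
  -- with `n = k + 1 - √k`, `2 ^ n` is negligible against `2 ^ k / k` while `k / n → 1`
  obtain ⟨n, hns⟩ : ∃ n, n + s = k + 1 := ⟨k + 1 - s, Nat.sub_add_cancel (by nlinarith)⟩
  have hn : 1 ≤ n := by nlinarith
  have hB : (n : ℝ) * dyadicSetBound k ≤ 2 * (n * 2 ^ n + 2 ^ k) := by
    exact_mod_cast mul_dyadicSetBound_le (k := k) hn (by omega)
  have hk3 : k ≤ 3 * s ^ 2 := by nlinarith
  have hkn : k * s ≤ (s + 1) * n := by nlinarith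
  have hnR : (0 : ℝ) < n := by exact_mod_cast hn
  have hsR : (0 : ℝ) < s := by exact_mod_cast hs
  have hpow : (2 : ℝ) ^ k = 2 ^ n * 2 ^ s / 2 := by
    rw [← pow_add, hns, pow_succ, mul_div_cancel_right₀ _ two_ne_zero]
  have hB' : (dyadicSetBound k : ℝ) ≤ 2 * 2 ^ n + 2 * 2 ^ k / n := by
    rw [← sub_le_iff_le_add', le_div_iff₀ hnR]
    linarith
  have hk3R : (k : ℝ) ≤ 3 * s ^ 2 := by exact_mod_cast hk3
  have hknR : (k : ℝ) / n ≤ 1 + 1 / s := by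
    rw [div_le_iff₀ hnR, one_add_div hsR.ne', div_mul_eq_mul_div, le_div_iff₀ hsR]
    exact_mod_cast hkn
  rw [le_div_iff₀ (by positivity)]
  calc (dyadicSetBound k : ℝ) * k ≤ (2 * 2 ^ n + 2 * 2 ^ k / n) * k := by gcongr
    _ = 2 * 2 ^ n * k + 2 * 2 ^ k * (k / n) := by ring
    _ ≤ 2 * 2 ^ n * (3 * s ^ 2) + 2 * 2 ^ k * (1 + 1 / s) := by gcongr
    _ = 2 ^ k * (2 + (12 * s ^ 2 / 2 ^ s + 2 / s)) := by
      rw [hpow]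
      field_simp
      ring

/-- (Liaw–Lin) There is a sequence `ε_k → 0` such that for every `k ≥ 1` and every
binary string `x` of length `2^k`, the number of distinct strings in the dyadic
substring set `S(x)` is at most `2^k(2+ε_k)/k`. -/
theorem dyadicSet_card_le_liaw_lin :
    ∃ ε : ℕ → ℝ, Filter.Tendsto ε Filter.atTop (nhds 0) ∧
      ∀ k : ℕ, 1 ≤ k → ∀ x : List Bool, x.length = 2 ^ k →
        ((dyadicSet k x).card : ℝ) ≤ (2 : ℝ) ^ k * (2 + ε k) / (k : ℝ) :=
  ⟨liawLinError, tendsto_liawLinError, fun _ hk _ hx =>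
    (Nat.cast_le.2 (card_dyadicSet_le hx)).trans (dyadicSetBound_le_liawLin hk)⟩
end

section
/- For any positive integer k, ∑_{i=0}^{k} min(2^{k−i}, 2^{2^i}) ≤ (2 + ε_k) · 2^k / k for some sequence ε_k → 0 as k → ∞. -/
/-!
Split the sum at the level `n` with `2^n + n < k ≤ 2^(n+1) + (n+1)`. The terms `2^(2^i)`,
`i ≤ n`, are distinct powers of two, so they add up to less than `2 · 2^(2^n)`; the terms
`2^(k-i)`, `i > n`, add up to less than `2 · 2^(k-n-1)`. Multiplying by `k ≤ 2^(n+1) + n + 1`,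
the second block gives `(2 + O(n/2^n)) · 2^k`. The first block is either negligible (when
`2^n + n + 1 ≤ k - n - 1`) or else `k ≤ 2^n + 2n + 1`, and then both blocks together give the
same bound. As `n → ∞` with `k`, one can take `ε_k = 8 (n+1) / 2^(n+1)`.
-/

open Finset Filter

theorem exists_le_two_pow_succ_add_succ (k : ℕ) : ∃ n, k ≤ 2 ^ (n + 1) + (n + 1) :=
  ⟨k, (Nat.le_succ k).trans (Nat.le_add_left _ _)⟩

/-- For `k ≥ 2`, `crossover k` is the last index `i` with `2^(2^i) < 2^(k-i)`. -/
def crossover (k : ℕ) : ℕ := Nat.find (exists_le_two_pow_succ_add_succ k)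

theorem le_two_pow_crossover (k : ℕ) : k ≤ 2 ^ (crossover k + 1) + (crossover k + 1) :=
  Nat.find_spec (exists_le_two_pow_succ_add_succ k)

theorem two_pow_crossover_add_lt {k : ℕ} (hk : 2 ≤ k) : 2 ^ crossover k + crossover k < k := by
  rcases h : crossover k with _ | n
  · simpa using Nat.lt_of_succ_le hk
  · have := Nat.find_min (exists_le_two_pow_succ_add_succ k) (show n < crossover k by omega)
    omega

theorem tendsto_crossover : Tendsto crossover atTop atTop := by
  refine tendsto_atTop.2 fun N => eventually_atTop.2 ⟨2 ^ N + N + 1, fun k hk => ?_⟩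
  refine (Nat.le_find_iff _ _).2 fun m hm hle => ?_
  have := Nat.pow_le_pow_right two_pos (Nat.succ_le_of_lt hm)
  omega

theorem sum_two_pow_two_pow_lt (n : ℕ) : ∑ i ∈ range (n + 1), 2 ^ 2 ^ i < 2 ^ (2 ^ n + 1) := by
  rw [← sum_image fun i _ j _ h => Nat.pow_right_injective le_rfl h]
  refine Nat.geomSum_lt le_rfl fun j hj => ?_
  obtain ⟨i, hi, rfl⟩ := mem_image.mp hj
  exact Nat.lt_succ_of_le (Nat.pow_le_pow_right two_pos (mem_range_succ_iff.mp hi))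

theorem sum_range_two_pow_sub_lt (d : ℕ) : ∑ i ∈ range (d + 1), 2 ^ (d - i) < 2 ^ (d + 1) := by
  have reflect := sum_range_reflect (2 ^ ·) (d + 1)
  rw [Nat.add_sub_cancel] at reflect
  rw [reflect]
  exact Nat.geomSum_lt le_rfl fun i => mem_range.mp

theorem sum_min_pow_lt {n k : ℕ} (h : n < k) :
    ∑ i ∈ range (k + 1), min (2 ^ (k - i)) (2 ^ 2 ^ i) < 2 ^ (2 ^ n + 1) + 2 ^ (k - n) := by
  obtain ⟨d, rfl⟩ := Nat.exists_eq_add_of_lt h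
  rw [show n + d + 1 + 1 = (n + 1) + (d + 1) by ring, sum_range_add,
    show n + d + 1 - n = d + 1 by omega]
  refine Nat.add_lt_add ?_ ?_
  · exact (sum_le_sum fun i _ => min_le_right _ _).trans_lt (sum_two_pow_two_pow_lt n)
  · refine (sum_le_sum fun i _ => ?_).trans_lt (sum_range_two_pow_sub_lt d)
    exact (min_le_left _ _).trans_eq (by congr 1; omega)

theorem two_pow_two_pow_add_two_pow_mul_le {n d : ℕ} (h₁ : 2 ^ n ≤ d) (h₂ : d ≤ 2 ^ (n + 1)) :
    (2 ^ 2 ^ n + 2 ^ d) * (n + 1 + d) ≤ (2 ^ (n + 1) + 4 * (n + 1)) * 2 ^ d := by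
  rcases le_or_gt (2 ^ n + (n + 1)) d with hfar | hnear
  · have hsmall : 2 ^ (n + 1) * 2 ^ 2 ^ n ≤ 2 ^ d := by
      rw [← pow_add, add_comm]; exact Nat.pow_le_pow_right two_pos hfar
    have hk : n + 1 + d ≤ 2 * 2 ^ (n + 1) := by
      have := Nat.lt_two_pow_self (n := n + 1); omega
    calc (2 ^ 2 ^ n + 2 ^ d) * (n + 1 + d)
        = (n + 1 + d) * 2 ^ 2 ^ n + (n + 1 + d) * 2 ^ d := by ring
      _ ≤ 2 * 2 ^ (n + 1) * 2 ^ 2 ^ n + (2 ^ (n + 1) + (n + 1)) * 2 ^ d :=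
          add_le_add (Nat.mul_le_mul_right _ hk) (Nat.mul_le_mul_right _ (by omega))
      _ ≤ 2 * 2 ^ d + (2 ^ (n + 1) + (n + 1)) * 2 ^ d := by rw [mul_assoc]; gcongr
      _ = (2 ^ (n + 1) + (n + 3)) * 2 ^ d := by ring
      _ ≤ (2 ^ (n + 1) + 4 * (n + 1)) * 2 ^ d := by gcongr; omega
  · have hle : 2 ^ 2 ^ n ≤ 2 ^ d := Nat.pow_le_pow_right two_pos h₁
    have hk : 2 * (n + 1 + d) ≤ 2 ^ (n + 1) + 4 * (n + 1) := by rw [pow_succ]; omega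
    calc (2 ^ 2 ^ n + 2 ^ d) * (n + 1 + d) ≤ (2 ^ d + 2 ^ d) * (n + 1 + d) := by gcongr
      _ = 2 * (n + 1 + d) * 2 ^ d := by ring
      _ ≤ (2 ^ (n + 1) + 4 * (n + 1)) * 2 ^ d := by gcongr

theorem sum_min_pow_mul_le {n k : ℕ} (h₁ : 2 ^ n + n < k) (h₂ : k ≤ 2 ^ (n + 1) + (n + 1)) :
    (∑ i ∈ range (k + 1), min (2 ^ (k - i)) (2 ^ 2 ^ i)) * k * 2 ^ (n + 1)
      ≤ (2 * 2 ^ (n + 1) + 8 * (n + 1)) * 2 ^ k := by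
  obtain ⟨d, rfl⟩ : ∃ d, k = n + 1 + d := ⟨k - (n + 1), by omega⟩
  have hsum := sum_min_pow_lt (show n < n + 1 + d by omega)
  rw [show n + 1 + d - n = d + 1 by omega] at hsum
  have hmid := two_pow_two_pow_add_two_pow_mul_le (show 2 ^ n ≤ d by omega) (by omega)
  calc (∑ i ∈ range (n + 1 + d + 1), min (2 ^ (n + 1 + d - i)) (2 ^ 2 ^ i)) * (n + 1 + d)
        * 2 ^ (n + 1)
      ≤ 2 * (2 ^ 2 ^ n + 2 ^ d) * (n + 1 + d) * 2 ^ (n + 1) := by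
        gcongr
        rw [pow_succ, pow_succ] at hsum
        omega
    _ = 2 * ((2 ^ 2 ^ n + 2 ^ d) * (n + 1 + d)) * 2 ^ (n + 1) := by ring
    _ ≤ 2 * ((2 ^ (n + 1) + 4 * (n + 1)) * 2 ^ d) * 2 ^ (n + 1) :=
        Nat.mul_le_mul_right _ (Nat.mul_le_mul_left 2 hmid)
    _ = (2 * 2 ^ (n + 1) + 8 * (n + 1)) * 2 ^ (n + 1 + d) := by ring

/-- For positive integers `k`, `∑_{i=0}^{k} min(2^{k−i}, 2^{2^i}) ≤ (2 + ε_k)·2^k/k`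
for some sequence `ε_k → 0` as `k → ∞`. -/
theorem sum_min_pow_le :
    ∃ ε : ℕ → ℝ, Filter.Tendsto ε Filter.atTop (nhds 0) ∧
      ∀ k : ℕ, 1 ≤ k →
        ((∑ i ∈ Finset.range (k + 1), min (2 ^ (k - i)) (2 ^ (2 ^ i)) : ℕ) : ℝ)
          ≤ (2 + ε k) * (2 : ℝ) ^ k / (k : ℝ) := by
  refine ⟨fun k => 8 * (((crossover k + 1 : ℕ) : ℝ) / 2 ^ (crossover k + 1)), ?_, fun k hk => ?_⟩
  · have := (tendsto_pow_const_div_const_pow_of_one_lt 1 one_lt_two).comp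
      ((tendsto_add_atTop_nat 1).comp tendsto_crossover)
    simpa using this.const_mul 8
  rcases hk.eq_or_lt with rfl | hk
  · norm_num [sum_range_succ]
    nlinarith [show (0 : ℝ) ≤ (crossover 1 + 1) / 2 ^ (crossover 1 + 1) by positivity]
  have key := sum_min_pow_mul_le (two_pow_crossover_add_lt hk) (le_two_pow_crossover k)
  have hpow : (0 : ℝ) < 2 ^ (crossover k + 1) := by positivity
  rw [le_div_iff₀ (by positivity)]
  calc ((∑ i ∈ range (k + 1), min (2 ^ (k - i)) (2 ^ 2 ^ i) : ℕ) : ℝ) * k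
      ≤ (2 * 2 ^ (crossover k + 1) + 8 * (crossover k + 1 : ℕ)) * 2 ^ k
          / 2 ^ (crossover k + 1) := by
        rw [le_div_iff₀ hpow]; exact_mod_cast key
    _ = (2 + 8 * ((crossover k + 1 : ℕ) / 2 ^ (crossover k + 1))) * 2 ^ k := by
        field_simp
end

section
/- Let G ∈ 𝒢 with terminal level k+1 and suppose the map φ_G is injective on the vertex set of G (i.e., G ∈ 𝒢*). Then the string x = φ_G(V_G^r) has length 2^k, contains both a 0 and a 1, and its left half differs from its right half; i.e., x ∈ S(dyadic). -/
lemma flatlen (n : ℕ) (s : List Bool) :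
    ((List.replicate n s).flatten).length = n * s.length := by
  simp [List.length_flatten, List.map_replicate, List.sum_replicate, smul_eq_mul]

lemma take_flat {m a : ℕ} (h : m ≤ a) (s : List Bool) :
    ((List.replicate a s).flatten).take (m * s.length) = (List.replicate m s).flatten := by
  have : a = m + (a - m) := by omega
  rw [this, List.replicate_add, List.flatten_append,
    List.take_left' (flatlen m s)]

lemma helper {p q : List Bool} {a b c : ℕ} (hc : 2 * c ≤ b) (ha : 1 ≤ a)
    (hab : (List.replicate a p).flatten = (List.replicate b q).flatten)
    (hlen : p.length = 2 * c * q.length) :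
    p.take (p.length / 2) = p.drop (p.length / 2) := by
  have h1 : ((List.replicate a p).flatten).take (1 * p.length)
      = (List.replicate 1 p).flatten := take_flat ha p
  simp only [one_mul, List.replicate_one, List.flatten_cons, List.flatten_nil,
    List.append_nil] at h1
  have h2 := take_flat hc q
  rw [hab, hlen] at h1
  have hp : p = (List.replicate (2 * c) q).flatten := by rw [← h1, h2]
  set F := (List.replicate c q).flatten with hF
  have hsplit : p = F ++ F := by
    rw [hp]; rw [show 2 * c = c + c by ring, List.replicate_add, List.flatten_append]
  have hFl : F.length = c * q.length := flatlen c q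
  have hhalf : p.length / 2 = F.length := by
    rw [hlen, hFl, mul_assoc]; exact Nat.mul_div_cancel_left _ (by norm_num)
  rw [hhalf, hsplit]
  rw [List.take_left' rfl, List.drop_left' rfl]



/-- The class `𝒢` of level-labeled rooted DAGs used to represent data strings:
finitely many vertices, a root at level 1, exactly two terminal vertices `T0, T1` at a
common level `k+1`, every nonterminal vertex has out-edges labeled `0` and `1` ending at
distinct vertices, levels strictly increase along edges, and every vertex is reachable
from the root.  (A vertex is terminal iff it equals `T0` or `T1`; `succ0, succ1` are
only meaningful on nonterminal vertices.) -/
structure BDD (V : Type) [Fintype V] [DecidableEq V] where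
  k : ℕ
  root : V
  T0 : V
  T1 : V
  succ0 : V → V
  succ1 : V → V
  level : V → ℕ
  k_pos : 1 ≤ k
  T0_ne_T1 : T0 ≠ T1
  root_level : level root = 1
  T0_level : level T0 = k + 1
  T1_level : level T1 = k + 1
  level_le : ∀ v, level v ≤ k + 1
  succ_ne : ∀ v, v ≠ T0 → v ≠ T1 → succ0 v ≠ succ1 v
  level_lt_succ0 : ∀ v, v ≠ T0 → v ≠ T1 → level v < level (succ0 v)
  level_lt_succ1 : ∀ v, v ≠ T0 → v ≠ T1 → level v < level (succ1 v)
  reachable : ∀ v, Relation.ReflTransGen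
    (fun a b => a ≠ T0 ∧ a ≠ T1 ∧ (b = succ0 a ∨ b = succ1 a)) root v

/-- `φ` is the canonical string map of `G`: `φ(T0) = 0`, `φ(T1) = 1`, and for a
nonterminal vertex `V` with `0`- and `1`-successors `V₀, V₁`,
`φ(V) = φ(V₀)^{2^{L(V₀)−L(V)−1}} φ(V₁)^{2^{L(V₁)−L(V)−1}}`
(the defining recursion of the canonical map; it determines `φ` uniquely). -/
def IsPhi {V : Type} [Fintype V] [DecidableEq V] (G : BDD V) (φ : V → List Bool) : Prop :=
  φ G.T0 = [false] ∧ φ G.T1 = [true] ∧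
  ∀ v, v ≠ G.T0 → v ≠ G.T1 →
    φ v = (List.replicate (2 ^ (G.level (G.succ0 v) - G.level v - 1)) (φ (G.succ0 v))).flatten
        ++ (List.replicate (2 ^ (G.level (G.succ1 v) - G.level v - 1)) (φ (G.succ1 v))).flatten

lemma phi_len {V : Type} [Fintype V] [DecidableEq V] (G : BDD V) (φ : V → List Bool)
    (hφ : IsPhi G φ) : ∀ v, (φ v).length = 2 ^ (G.k + 1 - G.level v) := by
  obtain ⟨h0, h1, hrec⟩ := hφ
  suffices H : ∀ n v, G.k + 1 - G.level v ≤ n → (φ v).length = 2 ^ (G.k + 1 - G.level v) by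
    intro v; exact H _ v le_rfl
  intro n
  induction n with
  | zero =>
    intro v hv
    by_cases hv0 : v = G.T0
    · subst hv0; rw [h0]; simp [G.T0_level]
    by_cases hv1 : v = G.T1
    · subst hv1; rw [h1]; simp [G.T1_level]
    · exfalso
      have h2 := G.level_lt_succ0 v hv0 hv1
      have h3 := G.level_le (G.succ0 v)
      omega
  | succ n ih =>
    intro v hv
    by_cases hv0 : v = G.T0
    · subst hv0; rw [h0]; simp [G.T0_level]
    by_cases hv1 : v = G.T1
    · subst hv1; rw [h1]; simp [G.T1_level]
    · have hL0 := G.level_lt_succ0 v hv0 hv1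
      have hL1 := G.level_lt_succ1 v hv0 hv1
      have hle0 := G.level_le (G.succ0 v)
      have hle1 := G.level_le (G.succ1 v)
      have e0 := ih (G.succ0 v) (by omega)
      have e1 := ih (G.succ1 v) (by omega)
      rw [hrec v hv0 hv1, List.length_append, flatlen, flatlen, e0, e1,
        ← pow_add, ← pow_add]
      rw [show G.level (G.succ0 v) - G.level v - 1 + (G.k + 1 - G.level (G.succ0 v))
          = G.k - G.level v by omega,
        show G.level (G.succ1 v) - G.level v - 1 + (G.k + 1 - G.level (G.succ1 v))
          = G.k - G.level v by omega,
        show G.k + 1 - G.level v = (G.k - G.level v) + 1 by omega, pow_succ]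
      ring

lemma phi_good {V : Type} [Fintype V] [DecidableEq V] (G : BDD V) (φ : V → List Bool)
    (hφ : IsPhi G φ) (hinj : Function.Injective φ) :
    ∀ v, v ≠ G.T0 → v ≠ G.T1 →
      false ∈ φ v ∧ true ∈ φ v ∧
      (φ v).take ((φ v).length / 2) ≠ (φ v).drop ((φ v).length / 2) := by
  have hlen := phi_len G φ hφ
  obtain ⟨h0, h1, hrec⟩ := hφ
  suffices H : ∀ n v, G.k + 1 - G.level v ≤ n → v ≠ G.T0 → v ≠ G.T1 →
      false ∈ φ v ∧ true ∈ φ v ∧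
      (φ v).take ((φ v).length / 2) ≠ (φ v).drop ((φ v).length / 2) by
    intro v; exact H _ v le_rfl
  intro n
  induction n with
  | zero =>
    intro v hv hv0 hv1
    exfalso
    have h2 := G.level_lt_succ0 v hv0 hv1
    have h3 := G.level_le (G.succ0 v)
    omega
  | succ n ih =>
    intro v hv hv0 hv1
    have hL0 := G.level_lt_succ0 v hv0 hv1
    have hL1 := G.level_lt_succ1 v hv0 hv1
    have hle0 := G.level_le (G.succ0 v)
    have hle1 := G.level_le (G.succ1 v)
    have hrecv := hrec v hv0 hv1
    have ha : 1 ≤ 2 ^ (G.level (G.succ0 v) - G.level v - 1) :=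
      Nat.one_le_pow _ _ (by norm_num)
    have hb : 1 ≤ 2 ^ (G.level (G.succ1 v) - G.level v - 1) :=
      Nat.one_le_pow _ _ (by norm_num)
    have hsl : (φ (G.succ0 v)).length = 2 ^ (G.k + 1 - G.level (G.succ0 v)) := hlen _
    have htl : (φ (G.succ1 v)).length = 2 ^ (G.k + 1 - G.level (G.succ1 v)) := hlen _
    have hmem0 : ∀ x, x ∈ φ (G.succ0 v) → x ∈ φ v := by
      intro x hx; rw [hrecv]
      exact List.mem_append_left _
        (List.mem_flatten.2 ⟨_, List.mem_replicate.2 ⟨by omega, rfl⟩, hx⟩)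
    have hmem1 : ∀ x, x ∈ φ (G.succ1 v) → x ∈ φ v := by
      intro x hx; rw [hrecv]
      exact List.mem_append_right _
        (List.mem_flatten.2 ⟨_, List.mem_replicate.2 ⟨by omega, rfl⟩, hx⟩)
    have hboth : false ∈ φ v ∧ true ∈ φ v := by
      by_cases hs0 : G.succ0 v = G.T0
      · refine ⟨hmem0 false (by rw [hs0, h0]; simp), ?_⟩
        by_cases hs1 : G.succ1 v = G.T1
        · exact hmem1 true (by rw [hs1, h1]; simp)
        · have hs1' : G.succ1 v ≠ G.T0 := fun h' =>
            G.succ_ne v hv0 hv1 (by rw [hs0, h'])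
          exact hmem1 true (ih (G.succ1 v) (by omega) hs1' hs1).2.1
      · by_cases hs0' : G.succ0 v = G.T1
        · refine ⟨?_, hmem0 true (by rw [hs0', h1]; simp)⟩
          by_cases hs1 : G.succ1 v = G.T0
          · exact hmem1 false (by rw [hs1, h0]; simp)
          · have hs1' : G.succ1 v ≠ G.T1 := fun h' =>
              G.succ_ne v hv0 hv1 (by rw [hs0', h'])
            exact hmem1 false (ih (G.succ1 v) (by omega) hs1 hs1').1
        · have := ih (G.succ0 v) (by omega) hs0 hs0'
          exact ⟨hmem0 false this.1, hmem0 true this.2.1⟩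
    refine ⟨hboth.1, hboth.2, ?_⟩
    have hlenv : (φ v).length = 2 ^ (G.k + 1 - G.level v) := hlen v
    have hlA : ((List.replicate (2 ^ (G.level (G.succ0 v) - G.level v - 1))
        (φ (G.succ0 v))).flatten).length = 2 ^ (G.k - G.level v) := by
      rw [flatlen, hsl, ← pow_add]; congr 1; omega
    have hlB : ((List.replicate (2 ^ (G.level (G.succ1 v) - G.level v - 1))
        (φ (G.succ1 v))).flatten).length = 2 ^ (G.k - G.level v) := by
      rw [flatlen, htl, ← pow_add]; congr 1; omega
    have hhalf : (φ v).length / 2 = 2 ^ (G.k - G.level v) := by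
      rw [hlenv, show G.k + 1 - G.level v = (G.k - G.level v) + 1 by omega, pow_succ]
      exact Nat.mul_div_cancel _ two_pos
    intro heq
    rw [hhalf, hrecv, List.take_left' hlA, List.drop_left' hlA] at heq
    rcases lt_trichotomy (G.level (G.succ0 v)) (G.level (G.succ1 v)) with hlt | heqL | hgt
    · have hs0T : G.succ0 v ≠ G.T0 := fun h' => by
        rw [h', G.T0_level] at hlt; omega
      have hs0T1 : G.succ0 v ≠ G.T1 := fun h' => by
        rw [h', G.T1_level] at hlt; omega
      refine (ih (G.succ0 v) (by omega) hs0T hs0T1).2.2 ?_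
      refine helper (c := 2 ^ (G.level (G.succ1 v) - G.level (G.succ0 v) - 1))
        ?_ ha heq ?_
      · rw [show (2 : ℕ) * 2 ^ (G.level (G.succ1 v) - G.level (G.succ0 v) - 1)
            = 2 ^ (G.level (G.succ1 v) - G.level (G.succ0 v)) by
          rw [← pow_succ']; congr 1; omega]
        exact Nat.pow_le_pow_right (by norm_num) (by omega)
      · rw [hsl, htl,
          show (2 : ℕ) * 2 ^ (G.level (G.succ1 v) - G.level (G.succ0 v) - 1)
            = 2 ^ (G.level (G.succ1 v) - G.level (G.succ0 v)) by
          rw [← pow_succ']; congr 1; omega, ← pow_add]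
        congr 1; omega
    · have hst : φ (G.succ0 v) = φ (G.succ1 v) := by
        have t1 := take_flat ha (φ (G.succ0 v))
        have t2 := take_flat hb (φ (G.succ1 v))
        simp only [one_mul, List.replicate_one, List.flatten_cons, List.flatten_nil,
          List.append_nil] at t1 t2
        rw [← t1, heq, hsl, heqL, ← htl, t2]
      exact G.succ_ne v hv0 hv1 (hinj hst)
    · have hs1T : G.succ1 v ≠ G.T0 := fun h' => by
        rw [h', G.T0_level] at hgt; omega
      have hs1T1 : G.succ1 v ≠ G.T1 := fun h' => by
        rw [h', G.T1_level] at hgt; omega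
      refine (ih (G.succ1 v) (by omega) hs1T hs1T1).2.2 ?_
      refine helper (c := 2 ^ (G.level (G.succ0 v) - G.level (G.succ1 v) - 1))
        ?_ hb heq.symm ?_
      · rw [show (2 : ℕ) * 2 ^ (G.level (G.succ0 v) - G.level (G.succ1 v) - 1)
            = 2 ^ (G.level (G.succ0 v) - G.level (G.succ1 v)) by
          rw [← pow_succ']; congr 1; omega]
        exact Nat.pow_le_pow_right (by norm_num) (by omega)
      · rw [hsl, htl,
          show (2 : ℕ) * 2 ^ (G.level (G.succ0 v) - G.level (G.succ1 v) - 1)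
            = 2 ^ (G.level (G.succ0 v) - G.level (G.succ1 v)) by
          rw [← pow_succ']; congr 1; omega, ← pow_add]
        congr 1; omega

/-- `S(dyadic)`: binary strings of length a power of two whose left half differs from
the right half and which contain at least one `0` and at least one `1`. -/
def SDyadic (x : List Bool) : Prop :=
  (∃ k : ℕ, x.length = 2 ^ k) ∧
    x.take (x.length / 2) ≠ x.drop (x.length / 2) ∧ false ∈ x ∧ true ∈ x

/-- If `G ∈ 𝒢` has terminal level `k+1` and the canonical map `φ_G` is injective on the
vertices (i.e. `G ∈ 𝒢*`), then the string `x = φ_G(V_G^r)` has length `2^k`, contains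
both a `0` and a `1`, and its left half differs from its right half, i.e.
`x ∈ S(dyadic)`. -/
theorem phi_root_SDyadic {V : Type} [Fintype V] [DecidableEq V]
    (G : BDD V) (φ : V → List Bool) (hφ : IsPhi G φ) (hinj : Function.Injective φ) :
    (φ G.root).length = 2 ^ G.k ∧ SDyadic (φ G.root) := by
  have hlen := phi_len G φ hφ
  have hroot0 : G.root ≠ G.T0 := fun h => by
    have h1 := G.root_level; have h2 := G.k_pos
    rw [h, G.T0_level] at h1; omega
  have hroot1 : G.root ≠ G.T1 := fun h => by
    have h1 := G.root_level; have h2 := G.k_pos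
    rw [h, G.T1_level] at h1; omega
  have hg := phi_good G φ hφ hinj G.root hroot0 hroot1
  have hL : (φ G.root).length = 2 ^ G.k := by
    rw [hlen, G.root_level]; congr 1
  exact ⟨hL, ⟨G.k, hL⟩, hg.2.2, hg.1, hg.2.1⟩
end

section
/- For each x ∈ S(dyadic) there exists a unique graph G ∈ 𝒢* such that φ_G(V_G^r) = x (existence and uniqueness of the ROBDD representing x). -/
/-- An isomorphism of graphs in `𝒢*`: a bijection of vertex sets preserving the root,
the two terminals, the labeled edges, and the levels. -/
def BDDIso {V W : Type} [Fintype V] [DecidableEq V] [Fintype W] [DecidableEq W]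
    (G : BDD V) (G' : BDD W) (e : V ≃ W) : Prop :=
  e G.root = G'.root ∧ e G.T0 = G'.T0 ∧ e G.T1 = G'.T1 ∧
  (∀ v, G'.level (e v) = G.level v) ∧
  (∀ v, v ≠ G.T0 → v ≠ G.T1 →
    e (G.succ0 v) = G'.succ0 (e v) ∧ e (G.succ1 v) = G'.succ1 (e v))

namespace DyadicString

variable {α : Type*}

def rep (n : ℕ) (l : List α) : List α := (List.replicate n l).flatten

@[simp] lemma length_rep (n : ℕ) (l : List α) : (rep n l).length = n * l.length := by
  simp [rep]

lemma mem_of_mem_rep {a : α} {n : ℕ} {l : List α} (h : a ∈ rep n l) : a ∈ l := by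
  simp only [rep, List.mem_flatten, List.mem_replicate] at h
  obtain ⟨_, ⟨-, rfl⟩, h⟩ := h
  exact h

lemma rep_two_pow_succ (n : ℕ) (l : List α) :
    rep (2 ^ (n + 1)) l = rep (2 ^ n) l ++ rep (2 ^ n) l := by
  rw [pow_succ, mul_two, rep, List.replicate_add, List.flatten_append]; rfl

def leftHalf (s : List α) : List α := s.take (s.length / 2)

def rightHalf (s : List α) : List α := s.drop (s.length / 2)

@[simp] lemma leftHalf_append_rightHalf (s : List α) : leftHalf s ++ rightHalf s = s :=
  List.take_append_drop _ _

lemma length_leftHalf (s : List α) : (leftHalf s).length = s.length / 2 :=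
  List.length_take_of_le (Nat.div_le_self _ _)

lemma length_rightHalf (s : List α) : (rightHalf s).length = s.length - s.length / 2 :=
  List.length_drop

lemma leftHalf_append {A B : List α} (h : A.length = B.length) : leftHalf (A ++ B) = A :=
  List.take_left' (by rw [List.length_append]; omega)

lemma rightHalf_append {A B : List α} (h : A.length = B.length) : rightHalf (A ++ B) = B :=
  List.drop_left' (by rw [List.length_append]; omega)

lemma length_leftHalf_of_length_eq {s : List α} {i : ℕ} (h : s.length = 2 ^ (i + 1)) :
    (leftHalf s).length = 2 ^ i := by
  rw [length_leftHalf, h, pow_succ]; simp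

lemma length_rightHalf_of_length_eq {s : List α} {i : ℕ} (h : s.length = 2 ^ (i + 1)) :
    (rightHalf s).length = 2 ^ i := by
  rw [length_rightHalf, h, pow_succ]; omega

lemma length_leftHalf_lt {s : List α} (h : s ≠ []) : (leftHalf s).length < s.length := by
  rw [length_leftHalf]; have := List.length_pos_iff.2 h; omega

lemma length_rep_of_level_lt {s : List α} {k l l' : ℕ} (hl : l < l') (hl' : l' ≤ k + 1)
    (hs : s.length = 2 ^ (k + 1 - l')) : (rep (2 ^ (l' - l - 1)) s).length = 2 ^ (k - l) := by
  rw [length_rep, hs, ← pow_add]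
  congr 1
  omega

variable [DecidableEq α]

/-- The guard `s ≠ []` is needed for termination: `[]` is its own left half. -/
def reduce (s : List α) : List α :=
  if s ≠ [] ∧ leftHalf s = rightHalf s then reduce (leftHalf s) else s
termination_by s.length
decreasing_by exact length_leftHalf_lt ‹_ ∧ _›.1

lemma exists_eq_rep_reduce (s : List α) : ∃ i, s = rep (2 ^ i) (reduce s) := by
  fun_induction reduce s with
  | case1 s h ih =>
    obtain ⟨i, hi⟩ := ih
    refine ⟨i + 1, ?_⟩
    rw [rep_two_pow_succ, ← hi]
    conv_lhs => rw [← leftHalf_append_rightHalf s, ← h.2]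
  | case2 => exact ⟨0, by simp [rep]⟩

lemma length_reduce_le (s : List α) : (reduce s).length ≤ s.length := by
  obtain ⟨i, hi⟩ := exists_eq_rep_reduce s
  conv_rhs => rw [hi]
  simp only [length_rep]
  exact Nat.le_mul_of_pos_left _ (by positivity)

lemma mem_reduce {a : α} {s : List α} (h : a ∈ s) : a ∈ reduce s := by
  obtain ⟨i, hi⟩ := exists_eq_rep_reduce s
  exact mem_of_mem_rep (hi ▸ h)

lemma reduce_eq_self_iff {s : List α} :
    reduce s = s ↔ s = [] ∨ leftHalf s ≠ rightHalf s := by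
  refine ⟨fun hs => ?_, fun hs => ?_⟩
  · by_contra! h
    have hlt := length_leftHalf_lt h.1
    have := length_reduce_le (leftHalf s)
    rw [reduce, if_pos h] at hs
    rw [hs] at this
    omega
  · rw [reduce, if_neg (by tauto)]

lemma reduce_reduce (s : List α) : reduce (reduce s) = reduce s := by
  fun_induction reduce s with
  | case1 s h ih => exact ih
  | case2 s h => rw [reduce_eq_self_iff]; tauto

lemma reduce_append_self (s : List α) : reduce (s ++ s) = reduce s := by
  rcases eq_or_ne s [] with rfl | hs
  · rfl
  rw [reduce, if_pos ⟨by simp [hs], by rw [leftHalf_append rfl, rightHalf_append rfl]⟩,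
    leftHalf_append rfl]

lemma reduce_rep_two_pow (n : ℕ) (s : List α) : reduce (rep (2 ^ n) s) = reduce s := by
  induction n with
  | zero => simp [rep]
  | succ n ih => rw [rep_two_pow_succ, reduce_append_self, ih]

lemma eq_of_reduce_eq {s t : List α} (hlen : s.length = t.length) (h : reduce s = reduce t) :
    s = t := by
  obtain ⟨i, hi⟩ := exists_eq_rep_reduce s
  obtain ⟨j, hj⟩ := exists_eq_rep_reduce t
  rcases eq_or_ne (reduce s) [] with h0 | h0
  · rw [hi, hj, ← h, h0]; simp [rep]
  have hij : i = j := by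
    rw [hi, hj, length_rep, length_rep, ← h] at hlen
    exact Nat.pow_right_injective le_rfl
      (Nat.eq_of_mul_eq_mul_right (List.length_pos_iff.2 h0) hlen)
  rw [hi, hj, h, hij]

lemma reduce_leftHalf_ne_reduce_rightHalf {s : List α} (hs : reduce s = s) (hne : s ≠ [])
    (heven : Even s.length) : reduce (leftHalf s) ≠ reduce (rightHalf s) := by
  refine fun h => (reduce_eq_self_iff.1 hs).elim hne (· (eq_of_reduce_eq ?_ h))
  rw [length_leftHalf, length_rightHalf]
  obtain ⟨m, hm⟩ := heven
  omega

lemma exists_eq_rep_reduce_of_length_eq {s : List α} {i : ℕ} (h : s.length = 2 ^ i) :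
    ∃ j ≤ i, (reduce s).length = 2 ^ j ∧ s = rep (2 ^ (i - j)) (reduce s) := by
  obtain ⟨a, ha⟩ := exists_eq_rep_reduce s
  have hlen : 2 ^ a * (reduce s).length = 2 ^ i := by rw [← h, ha, length_rep, ← ha]
  obtain ⟨j, hj, hred⟩ := (Nat.dvd_prime_pow Nat.prime_two).1 (Dvd.intro_left _ hlen)
  refine ⟨j, hj, hred, ?_⟩
  rw [hred, ← pow_add] at hlen
  rwa [← Nat.pow_right_injective le_rfl hlen, Nat.add_sub_cancel]

def HalfStep (s t : List α) : Prop :=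
  2 ≤ s.length ∧ (t = reduce (leftHalf s) ∨ t = reduce (rightHalf s))

def descendants (x : List α) : Set (List α) := {t | Relation.ReflTransGen HalfStep x t}

lemma HalfStep.length_lt {s t : List α} (h : HalfStep s t) : t.length < s.length := by
  obtain ⟨hs, rfl | rfl⟩ := h
  · have := length_reduce_le (leftHalf s); rw [length_leftHalf] at this; omega
  · have := length_reduce_le (rightHalf s); rw [length_rightHalf] at this; omega

lemma HalfStep.reduce_eq {s t : List α} (h : HalfStep s t) : reduce t = t := by
  obtain ⟨-, rfl | rfl⟩ := h <;> exact reduce_reduce _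

lemma HalfStep.mem_descendants {x s t : List α} (hst : HalfStep s t) (hs : s ∈ descendants x) :
    t ∈ descendants x :=
  Relation.ReflTransGen.tail hs hst

lemma self_mem_descendants (x : List α) : x ∈ descendants x := Relation.ReflTransGen.refl

lemma length_le_of_mem_descendants {x t : List α} (ht : t ∈ descendants x) :
    t.length ≤ x.length := by
  induction ht with
  | refl => rfl
  | tail _ hst ih => exact hst.length_lt.le.trans ih

lemma reduce_eq_self_of_mem_descendants {x t : List α} (hx : reduce x = x)
    (ht : t ∈ descendants x) : reduce t = t := by
  induction ht with
  | refl => exact hx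
  | tail _ hst _ => exact hst.reduce_eq

lemma HalfStep.exists_length_eq {s t : List α} {i : ℕ} (hst : HalfStep s t)
    (hs : s.length = 2 ^ i) : ∃ j < i, t.length = 2 ^ j := by
  obtain ⟨i, rfl⟩ := Nat.exists_eq_add_one_of_ne_zero (Nat.one_lt_two_pow_iff.1 (hs ▸ hst.1))
  obtain ⟨-, rfl | rfl⟩ := hst
  · obtain ⟨j, hj, hred, -⟩ :=
      exists_eq_rep_reduce_of_length_eq (length_leftHalf_of_length_eq hs)
    exact ⟨j, Nat.lt_succ_of_le hj, hred⟩
  · obtain ⟨j, hj, hred, -⟩ :=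
      exists_eq_rep_reduce_of_length_eq (length_rightHalf_of_length_eq hs)
    exact ⟨j, Nat.lt_succ_of_le hj, hred⟩

lemma HalfStep.log_length_lt {s t : List α} {i : ℕ} (hst : HalfStep s t)
    (hs : s.length = 2 ^ i) : Nat.log 2 t.length < Nat.log 2 s.length := by
  obtain ⟨j, hj, ht⟩ := hst.exists_length_eq hs
  rwa [hs, ht, Nat.log_pow one_lt_two, Nat.log_pow one_lt_two]

lemma exists_length_eq_of_mem_descendants {x t : List α} {K : ℕ} (hx : x.length = 2 ^ K)
    (ht : t ∈ descendants x) : ∃ i ≤ K, t.length = 2 ^ i := by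
  induction ht with
  | refl => exact ⟨K, le_rfl, hx⟩
  | tail _ hst ih =>
    obtain ⟨i, hiK, hi⟩ := ih
    obtain ⟨j, hj, ht⟩ := hst.exists_length_eq hi
    exact ⟨j, by omega, ht⟩

lemma singleton_mem_descendants {a : α} {x : List α} (ha : a ∈ x) : [a] ∈ descendants x := by
  induction hn : x.length using Nat.strong_induction_on generalizing x with
  | _ n ih =>
    subst hn
    by_cases hx : 2 ≤ x.length
    · have ha' : a ∈ leftHalf x ∨ a ∈ rightHalf x := by
        rw [← List.mem_append, leftHalf_append_rightHalf]; exact ha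
      rcases ha' with ha' | ha'
      · have hst : HalfStep x (reduce (leftHalf x)) := ⟨hx, Or.inl rfl⟩
        exact Relation.ReflTransGen.head hst (ih _ hst.length_lt (mem_reduce ha') rfl)
      · have hst : HalfStep x (reduce (rightHalf x)) := ⟨hx, Or.inr rfl⟩
        exact Relation.ReflTransGen.head hst (ih _ hst.length_lt (mem_reduce ha') rfl)
    · have hx1 : x.length = 1 := by have := List.length_pos_of_mem ha; omega
      obtain ⟨b, rfl⟩ := List.length_eq_one_iff.1 hx1
      rw [List.mem_singleton.1 ha]
      exact self_mem_descendants _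

instance [Finite α] (x : List α) : Finite (descendants x) :=
  ((List.finite_length_le α x.length).subset fun _ => length_le_of_mem_descendants).to_subtype

end DyadicString

namespace BDD

variable {V W : Type} [Fintype V] [DecidableEq V] [Fintype W] [DecidableEq W]

theorem induction_on_level (G : BDD V) {P : V → Prop} (hT0 : P G.T0) (hT1 : P G.T1)
    (step : ∀ v, v ≠ G.T0 → v ≠ G.T1 → P (G.succ0 v) → P (G.succ1 v) → P v) (v : V) :
    P v := by
  induction hn : G.k + 1 - G.level v using Nat.strong_induction_on generalizing v with
  | _ n ih =>
    subst hn
    by_cases h0 : v = G.T0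
    · exact h0 ▸ hT0
    by_cases h1 : v = G.T1
    · exact h1 ▸ hT1
    have := G.level_lt_succ0 v h0 h1
    have := G.level_lt_succ1 v h0 h1
    have := G.level_le (G.succ0 v)
    have := G.level_le (G.succ1 v)
    exact step v h0 h1 (ih _ (by omega) _ rfl) (ih _ (by omega) _ rfl)

def congr (e : V ≃ W) (G : BDD V) : BDD W where
  k := G.k
  root := e G.root
  T0 := e G.T0
  T1 := e G.T1
  succ0 w := e (G.succ0 (e.symm w))
  succ1 w := e (G.succ1 (e.symm w))
  level w := G.level (e.symm w)
  k_pos := G.k_pos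
  T0_ne_T1 := e.injective.ne G.T0_ne_T1
  root_level := by simpa using G.root_level
  T0_level := by simpa using G.T0_level
  T1_level := by simpa using G.T1_level
  level_le w := G.level_le _
  succ_ne w h0 h1 := e.injective.ne <|
    G.succ_ne _ (fun h => h0 (e.symm_apply_eq.1 h)) (fun h => h1 (e.symm_apply_eq.1 h))
  level_lt_succ0 w h0 h1 := by
    simpa using G.level_lt_succ0 _ (fun h => h0 (e.symm_apply_eq.1 h))
      (fun h => h1 (e.symm_apply_eq.1 h))
  level_lt_succ1 w h0 h1 := by
    simpa using G.level_lt_succ1 _ (fun h => h0 (e.symm_apply_eq.1 h))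
      (fun h => h1 (e.symm_apply_eq.1 h))
  reachable w := by
    refine e.apply_symm_apply w ▸ Relation.ReflTransGen.lift e ?_ _ _ (G.reachable (e.symm w))
    rintro a b ⟨h0, h1, hb⟩
    refine ⟨e.injective.ne h0, e.injective.ne h1, ?_⟩
    simpa using hb

end BDD

namespace IsPhi

open DyadicString

variable {V W : Type} [Fintype V] [DecidableEq V] [Fintype W] [DecidableEq W]
  {G : BDD V} {G' : BDD W} {φ : V → List Bool} {φ' : W → List Bool}

lemma eq_rep_append_rep (hφ : IsPhi G φ) {v : V} (h0 : v ≠ G.T0) (h1 : v ≠ G.T1) :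
    φ v = rep (2 ^ (G.level (G.succ0 v) - G.level v - 1)) (φ (G.succ0 v)) ++
      rep (2 ^ (G.level (G.succ1 v) - G.level v - 1)) (φ (G.succ1 v)) :=
  hφ.2.2 v h0 h1

lemma length_eq (hφ : IsPhi G φ) (v : V) : (φ v).length = 2 ^ (G.k + 1 - G.level v) := by
  induction v using G.induction_on_level with
  | hT0 => simp [hφ.1, G.T0_level]
  | hT1 => simp [hφ.2.1, G.T1_level]
  | step v h0 h1 ih0 ih1 =>
    have := G.level_lt_succ0 v h0 h1
    rw [hφ.eq_rep_append_rep h0 h1, List.length_append,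
      length_rep_of_level_lt this (G.level_le _) ih0,
      length_rep_of_level_lt (G.level_lt_succ1 v h0 h1) (G.level_le _) ih1, ← two_mul,
      ← pow_succ']
    have := G.level_le (G.succ0 v)
    congr 1
    omega

lemma length_rep_succ0 (hφ : IsPhi G φ) {v : V} (h0 : v ≠ G.T0) (h1 : v ≠ G.T1) :
    (rep (2 ^ (G.level (G.succ0 v) - G.level v - 1)) (φ (G.succ0 v))).length =
      2 ^ (G.k - G.level v) :=
  length_rep_of_level_lt (G.level_lt_succ0 v h0 h1) (G.level_le _) (hφ.length_eq _)

lemma length_rep_succ1 (hφ : IsPhi G φ) {v : V} (h0 : v ≠ G.T0) (h1 : v ≠ G.T1) :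
    (rep (2 ^ (G.level (G.succ1 v) - G.level v - 1)) (φ (G.succ1 v))).length =
      2 ^ (G.k - G.level v) :=
  length_rep_of_level_lt (G.level_lt_succ1 v h0 h1) (G.level_le _) (hφ.length_eq _)

lemma leftHalf_eq (hφ : IsPhi G φ) {v : V} (h0 : v ≠ G.T0) (h1 : v ≠ G.T1) :
    leftHalf (φ v) = rep (2 ^ (G.level (G.succ0 v) - G.level v - 1)) (φ (G.succ0 v)) := by
  rw [hφ.eq_rep_append_rep h0 h1, leftHalf_append]
  rw [hφ.length_rep_succ0 h0 h1, hφ.length_rep_succ1 h0 h1]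

lemma rightHalf_eq (hφ : IsPhi G φ) {v : V} (h0 : v ≠ G.T0) (h1 : v ≠ G.T1) :
    rightHalf (φ v) = rep (2 ^ (G.level (G.succ1 v) - G.level v - 1)) (φ (G.succ1 v)) := by
  rw [hφ.eq_rep_append_rep h0 h1, rightHalf_append]
  rw [hφ.length_rep_succ0 h0 h1, hφ.length_rep_succ1 h0 h1]

lemma reduce_eq_self (hφ : IsPhi G φ) (hinj : Function.Injective φ) (v : V) :
    reduce (φ v) = φ v := by
  induction v using G.induction_on_level with
  | hT0 => simp [hφ.1, reduce_eq_self_iff, leftHalf, rightHalf]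
  | hT1 => simp [hφ.2.1, reduce_eq_self_iff, leftHalf, rightHalf]
  | step v h0 h1 ih0 ih1 =>
    refine reduce_eq_self_iff.2 (Or.inr fun h => G.succ_ne v h0 h1 (hinj ?_))
    rw [hφ.leftHalf_eq h0 h1, hφ.rightHalf_eq h0 h1] at h
    simpa only [reduce_rep_two_pow, ih0, ih1] using congrArg reduce h

lemma succ0_eq (hφ : IsPhi G φ) (hinj : Function.Injective φ) {v : V} (h0 : v ≠ G.T0)
    (h1 : v ≠ G.T1) : φ (G.succ0 v) = reduce (leftHalf (φ v)) := by
  rw [hφ.leftHalf_eq h0 h1, reduce_rep_two_pow, hφ.reduce_eq_self hinj]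

lemma succ1_eq (hφ : IsPhi G φ) (hinj : Function.Injective φ) {v : V} (h0 : v ≠ G.T0)
    (h1 : v ≠ G.T1) : φ (G.succ1 v) = reduce (rightHalf (φ v)) := by
  rw [hφ.rightHalf_eq h0 h1, reduce_rep_two_pow, hφ.reduce_eq_self hinj]

lemma two_le_length_iff (hφ : IsPhi G φ) {v : V} :
    2 ≤ (φ v).length ↔ v ≠ G.T0 ∧ v ≠ G.T1 := by
  refine ⟨fun h => ⟨?_, ?_⟩, fun ⟨h0, h1⟩ => ?_⟩
  · rintro rfl; simp [hφ.1] at h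
  · rintro rfl; simp [hφ.2.1] at h
  rw [hφ.length_eq]
  have := G.level_lt_succ0 v h0 h1
  have := G.level_le (G.succ0 v)
  exact Nat.le_self_pow (by omega) 2

lemma range_eq (hφ : IsPhi G φ) (hinj : Function.Injective φ) :
    Set.range φ = descendants (φ G.root) := by
  ext t
  constructor
  · rintro ⟨v, rfl⟩
    induction G.reachable v with
    | refl => exact self_mem_descendants _
    | tail _ hab ih =>
      obtain ⟨h0, h1, rfl | rfl⟩ := hab
      · exact ih.tail ⟨hφ.two_le_length_iff.2 ⟨h0, h1⟩, Or.inl (hφ.succ0_eq hinj h0 h1)⟩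
      · exact ih.tail ⟨hφ.two_le_length_iff.2 ⟨h0, h1⟩, Or.inr (hφ.succ1_eq hinj h0 h1)⟩
  · intro ht
    induction ht with
    | refl => exact ⟨G.root, rfl⟩
    | tail _ hst ih =>
      obtain ⟨v, rfl⟩ := ih
      obtain ⟨h2, rfl | rfl⟩ := hst
      all_goals obtain ⟨h0, h1⟩ := hφ.two_le_length_iff.1 h2
      · exact ⟨G.succ0 v, hφ.succ0_eq hinj h0 h1⟩
      · exact ⟨G.succ1 v, hφ.succ1_eq hinj h0 h1⟩

lemma bddIso_of_comp_eq (hφ : IsPhi G φ) (hinj : Function.Injective φ) (hφ' : IsPhi G' φ')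
    (hinj' : Function.Injective φ') (hroot : φ G.root = φ' G'.root) (e : V ≃ W)
    (he : ∀ v, φ' (e v) = φ v) : BDDIso G G' e := by
  have hk : G.k = G'.k := by
    have := hφ.length_eq G.root
    rw [hroot, hφ'.length_eq, G.root_level, G'.root_level] at this
    have := Nat.pow_right_injective le_rfl this
    omega
  refine ⟨hinj' (by rw [he, hroot]), hinj' (by rw [he, hφ.1, hφ'.1]),
    hinj' (by rw [he, hφ.2.1, hφ'.2.1]), fun v => ?_, fun v h0 h1 => ?_⟩
  · have := congrArg List.length (he v)
    rw [hφ.length_eq, hφ'.length_eq] at this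
    have := Nat.pow_right_injective le_rfl this
    have := G.level_le v
    have := G'.level_le (e v)
    omega
  · obtain ⟨h0', h1'⟩ :=
      hφ'.two_le_length_iff.1 (by rw [he]; exact hφ.two_le_length_iff.2 ⟨h0, h1⟩)
    refine ⟨hinj' ?_, hinj' ?_⟩
    · rw [he, hφ.succ0_eq hinj h0 h1, hφ'.succ0_eq hinj' h0' h1', he]
    · rw [he, hφ.succ1_eq hinj h0 h1, hφ'.succ1_eq hinj' h0' h1', he]

lemma exists_bddIso (hφ : IsPhi G φ) (hinj : Function.Injective φ) (hφ' : IsPhi G' φ')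
    (hinj' : Function.Injective φ') (hroot : φ G.root = φ' G'.root) :
    ∃ e : V ≃ W, BDDIso G G' e := by
  have hrange : Set.range φ = Set.range φ' := by
    rw [hφ.range_eq hinj, hφ'.range_eq hinj', hroot]
  let e := (Equiv.ofInjective φ hinj).trans
    ((Equiv.setCongr hrange).trans (Equiv.ofInjective φ' hinj').symm)
  exact ⟨e, hφ.bddIso_of_comp_eq hinj hφ' hinj' hroot e
    fun v => Equiv.apply_ofInjective_symm hinj' _⟩

lemma congr (hφ : IsPhi G φ) (e : V ≃ W) : IsPhi (G.congr e) (φ ∘ e.symm) := by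
  refine ⟨by simpa [BDD.congr] using hφ.1, by simpa [BDD.congr] using hφ.2.1,
    fun w h0 h1 => ?_⟩
  simpa [BDD.congr] using hφ.2.2 (e.symm w) (fun h => h0 (e.symm_apply_eq.1 h))
    (fun h => h1 (e.symm_apply_eq.1 h))

end IsPhi

namespace SDyadic

open DyadicString

variable {x : List Bool}

lemma two_le_length (hx : SDyadic x) : 2 ≤ x.length := by
  obtain ⟨-, -, hf, ht⟩ := hx
  by_contra! h
  have hx1 : x.length = 1 := by have := List.length_pos_of_mem hf; omega
  obtain ⟨a, rfl⟩ := List.length_eq_one_iff.1 hx1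
  simp_all

lemma length_eq_two_pow_log (hx : SDyadic x) : x.length = 2 ^ Nat.log 2 x.length := by
  obtain ⟨⟨K, hK⟩, -⟩ := hx
  rw [hK, Nat.log_pow one_lt_two]

lemma reduce_eq (hx : SDyadic x) : reduce x = x := reduce_eq_self_iff.2 (Or.inr hx.2.1)

lemma exists_length_eq_of_mem_descendants (hx : SDyadic x) {t : List Bool}
    (ht : t ∈ descendants x) : ∃ i ≤ Nat.log 2 x.length, t.length = 2 ^ i :=
  DyadicString.exists_length_eq_of_mem_descendants hx.length_eq_two_pow_log ht

end SDyadic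

namespace DyadicString

noncomputable instance (x : List Bool) : Fintype (descendants x) := Fintype.ofFinite _

variable {x : List Bool}

def leftChild (v : descendants x) : descendants x :=
  if h : 2 ≤ v.1.length then
    ⟨reduce (leftHalf v.1), HalfStep.mem_descendants ⟨h, Or.inl rfl⟩ v.2⟩
  else v

def rightChild (v : descendants x) : descendants x :=
  if h : 2 ≤ v.1.length then
    ⟨reduce (rightHalf v.1), HalfStep.mem_descendants ⟨h, Or.inr rfl⟩ v.2⟩
  else v

lemma leftChild_val {v : descendants x} (h : 2 ≤ v.1.length) :
    (leftChild v).1 = reduce (leftHalf v.1) := by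
  rw [leftChild, dif_pos h]

lemma rightChild_val {v : descendants x} (h : 2 ≤ v.1.length) :
    (rightChild v).1 = reduce (rightHalf v.1) := by
  rw [rightChild, dif_pos h]

lemma halfStep_leftChild {v : descendants x} (h : 2 ≤ v.1.length) :
    HalfStep v.1 (leftChild v).1 :=
  ⟨h, Or.inl (leftChild_val h)⟩

lemma halfStep_rightChild {v : descendants x} (h : 2 ≤ v.1.length) :
    HalfStep v.1 (rightChild v).1 :=
  ⟨h, Or.inr (rightChild_val h)⟩

lemma log_length_le (v : descendants x) :
    Nat.log 2 v.1.length ≤ Nat.log 2 x.length :=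
  Nat.log_mono_right (length_le_of_mem_descendants v.2)

lemma exists_length_eq_of_ne (hx : SDyadic x) {v : descendants x}
    (h0 : v ≠ ⟨[false], singleton_mem_descendants hx.2.2.1⟩)
    (h1 : v ≠ ⟨[true], singleton_mem_descendants hx.2.2.2⟩) :
    ∃ i, i + 1 ≤ Nat.log 2 x.length ∧ v.1.length = 2 ^ (i + 1) := by
  obtain ⟨_ | i, hiK, hi⟩ := hx.exists_length_eq_of_mem_descendants v.2
  · obtain ⟨(_ | _), h⟩ := List.length_eq_one_iff.1 hi
    · exact absurd (Subtype.ext h) h0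
    · exact absurd (Subtype.ext h) h1
  · exact ⟨i, hiK, hi⟩

lemma two_le_length_of_ne (hx : SDyadic x) {v : descendants x}
    (h0 : v ≠ ⟨[false], singleton_mem_descendants hx.2.2.1⟩)
    (h1 : v ≠ ⟨[true], singleton_mem_descendants hx.2.2.2⟩) : 2 ≤ v.1.length := by
  obtain ⟨i, -, hi⟩ := exists_length_eq_of_ne hx h0 h1
  exact hi ▸ Nat.le_self_pow (Nat.succ_ne_zero i) 2

noncomputable def robdd (hx : SDyadic x) : BDD (descendants x) where
  k := Nat.log 2 x.length
  root := ⟨x, self_mem_descendants x⟩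
  T0 := ⟨[false], singleton_mem_descendants hx.2.2.1⟩
  T1 := ⟨[true], singleton_mem_descendants hx.2.2.2⟩
  succ0 := leftChild
  succ1 := rightChild
  level v := Nat.log 2 x.length + 1 - Nat.log 2 v.1.length
  k_pos := Nat.le_log_of_pow_le one_lt_two (by simpa using hx.two_le_length)
  T0_ne_T1 := by simp
  root_level := by simp
  T0_level := by simp
  T1_level := by simp
  level_le _ := Nat.sub_le _ _
  succ_ne v h0 h1 := by
    obtain ⟨i, -, hi⟩ := exists_length_eq_of_ne hx h0 h1
    have h2 := two_le_length_of_ne hx h0 h1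
    rw [ne_eq, Subtype.ext_iff, leftChild_val h2, rightChild_val h2]
    refine reduce_leftHalf_ne_reduce_rightHalf
      (reduce_eq_self_of_mem_descendants hx.reduce_eq v.2) (List.ne_nil_of_length_pos (by omega))
      ⟨2 ^ i, by rw [hi, pow_succ, mul_two]⟩
  level_lt_succ0 v h0 h1 := by
    obtain ⟨i, -, hi⟩ := exists_length_eq_of_ne hx h0 h1
    have := (halfStep_leftChild (two_le_length_of_ne hx h0 h1)).log_length_lt hi
    have := log_length_le v
    omega
  level_lt_succ1 v h0 h1 := by
    obtain ⟨i, -, hi⟩ := exists_length_eq_of_ne hx h0 h1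
    have := (halfStep_rightChild (two_le_length_of_ne hx h0 h1)).log_length_lt hi
    have := log_length_le v
    omega
  reachable v := by
    obtain ⟨t, ht⟩ := v
    induction ht with
    | refl => exact .refl
    | @tail s t hs hst ih =>
      have hne : ∀ b : Bool, s ≠ [b] := fun b h => by simpa [h] using hst.1
      refine ih.tail ⟨fun h => hne false (congrArg Subtype.val h),
        fun h => hne true (congrArg Subtype.val h), ?_⟩
      obtain ⟨h2, rfl | rfl⟩ := hst
      · exact Or.inl (Subtype.ext (leftChild_val (v := ⟨s, hs⟩) h2).symm)
      · exact Or.inr (Subtype.ext (rightChild_val (v := ⟨s, hs⟩) h2).symm)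

lemma isPhi_robdd (hx : SDyadic x) : IsPhi (robdd hx) Subtype.val := by
  refine ⟨rfl, rfl, fun v h0 h1 => ?_⟩
  obtain ⟨i, hiK, hi⟩ := exists_length_eq_of_ne hx h0 h1
  have h2 := two_le_length_of_ne hx h0 h1
  have hhalf : ∀ (c : descendants x) (s : List Bool), s.length = 2 ^ i → c.1 = reduce s →
      s = rep (2 ^ ((robdd hx).level c - (robdd hx).level v - 1)) c.1 := by
    intro c s hs hc
    obtain ⟨j, hj, hred, hrep⟩ := exists_eq_rep_reduce_of_length_eq hs
    rw [← hc] at hred hrep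
    convert hrep using 3
    simp only [robdd, hi, hred, Nat.log_pow one_lt_two]
    omega
  change v.1 = rep _ (leftChild v).1 ++ rep _ (rightChild v).1
  conv_lhs => rw [← leftHalf_append_rightHalf v.1]
  exact congrArg₂ (· ++ ·) (hhalf _ _ (length_leftHalf_of_length_eq hi) (leftChild_val h2))
    (hhalf _ _ (length_rightHalf_of_length_eq hi) (rightChild_val h2))

end DyadicString

/-- For each `x ∈ S(dyadic)` there exists a graph `G ∈ 𝒢*` (a `BDD` whose canonical map
is injective) with `φ_G(V_G^r) = x`, and it is unique up to isomorphism: the ROBDD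
representing `x`. -/
theorem exists_unique_ROBDD (x : List Bool) (hx : SDyadic x) :
    (∃ (m : ℕ) (G : BDD (Fin m)) (φ : Fin m → List Bool),
      IsPhi G φ ∧ Function.Injective φ ∧ φ G.root = x) ∧
    (∀ (m m' : ℕ) (G : BDD (Fin m)) (G' : BDD (Fin m'))
        (φ : Fin m → List Bool) (φ' : Fin m' → List Bool),
      IsPhi G φ → Function.Injective φ → φ G.root = x →
      IsPhi G' φ' → Function.Injective φ' → φ' G'.root = x →
      ∃ e : Fin m ≃ Fin m', BDDIso G G' e) := by
  refine ⟨?_, fun m m' G G' φ φ' hφ hinj hroot hφ' hinj' hroot' =>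
    hφ.exists_bddIso hinj hφ' hinj' (hroot.trans hroot'.symm)⟩
  let e := Fintype.equivFin (DyadicString.descendants x)
  exact ⟨_, (DyadicString.robdd hx).congr e, _, (DyadicString.isPhi_robdd hx).congr e,
    Subtype.val_injective.comp e.symm.injective, by simp [BDD.congr, DyadicString.robdd]⟩
end

section
/- In the ROBDD-based compression scheme, the total lengths of the level strings satisfy ∑_{i=2}^{k+1} Q_i ≤ ∑_{i=2}^{k+1} |S_i|, where Q_i is the sum of the exponents q over the distinct Type II entries A_m^q of Ŝ_i. (Each Type II symbol A_m^q with q > 1 forces q−1 further occurrences A_m^{q−1},...,A_m in later strings, so the total exponent sum is dominated by the total length of all strings.) -/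
/-- The list of distinct entries of a sequence, in order of first left-to-right
appearance. -/
def firstOccs {A : Type*} [DecidableEq A] : List A → List A
  | [] => []
  | a :: rest => a :: (firstOccs rest).filter (· ≠ a)

variable {V : Type} [Fintype V] [DecidableEq V]

/-- One step of the recursive generation of the level strings: from `S_{i−1}`, take the
first occurrences of its distinct symbols; a symbol `A_m^q` with `q > 1` produces
`A_m^{q−1}`; a symbol `A_m` (i.e. `q = 1`, a nonterminal vertex) produces the pair
`A_{m₀}^{L(A_{m₀})−L(A_m)}, A_{m₁}^{L(A_{m₁})−L(A_m)}` where `A_{m₀}, A_{m₁}` are its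
`0`- and `1`-successors.  A symbol `A_m^q` is represented as the pair `(A_m, q)`. -/
def nextS (G : BDD V) (s : List (V × ℕ)) : List (V × ℕ) :=
  (firstOccs s).flatMap fun p =>
    if 1 < p.2 then [(p.1, p.2 - 1)]
    else [(G.succ0 p.1, G.level (G.succ0 p.1) - G.level p.1),
          (G.succ1 p.1, G.level (G.succ1 p.1) - G.level p.1)]

/-- The level strings: `Sstr G (i-1)` is the paper's `S_i`, so `Sstr G 0 = S_1 = (A_1)`
consists of the root alone. -/
def Sstr (G : BDD V) : ℕ → List (V × ℕ)
  | 0 => [(G.root, 1)]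
  | i + 1 => nextS G (Sstr G i)

/-- `Ŝ_i` (for the paper's index `i ≥ 2`): the subsequence of `S_i` arising from the
substitutions for the distinct entries of `S_{i−1}` of the form `A_m` (i.e. `q = 1`). -/
def Shat (G : BDD V) (i : ℕ) : List (V × ℕ) :=
  (firstOccs (Sstr G (i - 2))).flatMap fun p =>
    if 1 < p.2 then []
    else [(G.succ0 p.1, G.level (G.succ0 p.1) - G.level p.1),
          (G.succ1 p.1, G.level (G.succ1 p.1) - G.level p.1)]

/-- The vertices that have appeared in the paper's strings `S_1, ..., S_{i−1}`. -/
def appearedBefore (G : BDD V) (i : ℕ) : List V :=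
  (List.range (i - 1)).flatMap fun j => (Sstr G j).map Prod.fst

/-- `Q_i`: the sum of the exponents `q` over the distinct Type II entries `A_m^q` of
`Ŝ_i` (those whose vertex `A_m` has not appeared in `S_1, ..., S_{i−1}`). -/
def Qsum (G : BDD V) (i : ℕ) : ℕ :=
  (((firstOccs (Shat G i)).filter
      (fun p => decide (p.1 ∉ appearedBefore G i))).map Prod.snd).sum

/-! A Type II entry `A_m^q` of `Ŝ_i` lies in `S_i`, so its vertex occurs in each of
`S_i, …, S_{i+q-1}` (as `A_m^q, …, A_m`). Since `A_m` is new in `S_i` and `q` is fixed by the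
level of `A_m`, the pairs `(i + t, A_m)`, `t < q`, coming from different Type II entries are
distinct; so `∑ Q_i` counts distinct pairs `(j, v)` with `v` occurring in `S_j`, and there are at
most `∑ |S_j|` of those. -/

section FirstOccs

variable {A : Type*} [DecidableEq A]

@[simp]
theorem mem_firstOccs {l : List A} {a : A} : a ∈ firstOccs l ↔ a ∈ l := by
  induction l with
  | nil => simp [firstOccs]
  | cons b t ih => by_cases h : a = b <;> simp [firstOccs, ih, h]

theorem nodup_firstOccs (l : List A) : (firstOccs l).Nodup := by
  induction l with
  | nil => simp [firstOccs]
  | cons b t ih => exact (ih.filter _).cons (by simp)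

end FirstOccs

section LevelStrings

variable (G : BDD V)

def typeIIEntries (i : ℕ) : List (V × ℕ) :=
  (firstOccs (Shat G i)).filter (fun p => decide (p.1 ∉ appearedBefore G i))

theorem Qsum_eq_sum_toFinset (i : ℕ) : Qsum G i = ∑ p ∈ (typeIIEntries G i).toFinset, p.2 :=
  (List.sum_toFinset _ ((nodup_firstOccs _).filter _)).symm

theorem mem_appearedBefore {i : ℕ} {v : V} :
    v ∈ appearedBefore G i ↔ ∃ j < i - 1, v ∈ (Sstr G j).map Prod.fst := by
  simp [appearedBefore]

theorem mem_Sstr_of_mem_Shat {n : ℕ} {p : V × ℕ} (hp : p ∈ Shat G (n + 2)) :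
    p ∈ Sstr G (n + 1) := by
  simp only [Shat, Nat.add_sub_cancel, List.mem_flatMap] at hp
  obtain ⟨x, hx, hpx⟩ := hp
  refine List.mem_flatMap.2 ⟨x, hx, ?_⟩
  split_ifs at hpx ⊢ <;> simp_all

theorem mem_Sstr_of_mem_typeIIEntries {i : ℕ} (hi : 2 ≤ i) {p : V × ℕ}
    (hp : p ∈ typeIIEntries G i) : p ∈ Sstr G (i - 1) := by
  obtain ⟨n, rfl⟩ := Nat.exists_eq_add_of_le' hi
  simp only [typeIIEntries, List.mem_filter, mem_firstOccs] at hp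
  exact mem_Sstr_of_mem_Shat G hp.1

/-- Up to the terminal string `S_{k+1}`, an entry `A_m^q` of `S_{n+1}` has `L(A_m) = n + q`. -/
theorem level_eq_of_mem_Sstr {n : ℕ} (hn : n ≤ G.k) {p : V × ℕ} (hp : p ∈ Sstr G n) :
    G.level p.1 = n + p.2 ∧ 0 < p.2 := by
  induction n generalizing p with
  | zero =>
    simp only [Sstr, List.mem_singleton] at hp
    simp [hp, G.root_level]
  | succ n ih =>
    obtain ⟨x, hx, hpx⟩ := List.mem_flatMap.1 hp
    obtain ⟨hlev, hpos⟩ := ih (by omega) (mem_firstOccs.1 hx)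
    split_ifs at hpx with hq
    · simp only [List.mem_singleton] at hpx
      subst hpx
      constructor <;> simp <;> omega
    · have hT0 : x.1 ≠ G.T0 := fun h => by rw [h, G.T0_level] at hlev; omega
      have hT1 : x.1 ≠ G.T1 := fun h => by rw [h, G.T1_level] at hlev; omega
      have h0 := G.level_lt_succ0 x.1 hT0 hT1
      have h1 := G.level_lt_succ1 x.1 hT0 hT1
      simp only [List.mem_cons, List.not_mem_nil, or_false] at hpx
      rcases hpx with rfl | rfl <;> constructor <;> simp <;> omega

theorem mem_Sstr_succ_of_one_lt {n : ℕ} {v : V} {q : ℕ} (h : (v, q) ∈ Sstr G n) (hq : 1 < q) :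
    (v, q - 1) ∈ Sstr G (n + 1) :=
  List.mem_flatMap.2 ⟨(v, q), mem_firstOccs.2 h, by simp [hq]⟩

theorem mem_Sstr_add {n t : ℕ} {v : V} {q : ℕ} (h : (v, q + t) ∈ Sstr G n) (hq : 0 < q) :
    (v, q) ∈ Sstr G (n + t) := by
  induction t generalizing q with
  | zero => exact h
  | succ t ih =>
    have := mem_Sstr_succ_of_one_lt G (ih (q := q + 1) (by rwa [add_right_comm]) (by omega))
      (by omega)
    simpa [← add_assoc] using this

theorem notMem_Sstr_of_mem_typeIIEntries {i j : ℕ} {v : V} {q q' : ℕ}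
    (h : (v, q) ∈ typeIIEntries G i) (hj : j < i - 1) : (v, q') ∉ Sstr G j := fun hm => by
  simp only [typeIIEntries, List.mem_filter, decide_eq_true_eq, mem_appearedBefore G] at h
  exact h.2 ⟨j, hj, List.mem_map.2 ⟨_, hm, rfl⟩⟩

theorem eq_of_mem_typeIIEntries {i i' : ℕ} {v : V} {q q' : ℕ} (hi : 2 ≤ i) (hi' : 2 ≤ i')
    (hik : i ≤ G.k + 1) (h : (v, q) ∈ typeIIEntries G i) (h' : (v, q') ∈ typeIIEntries G i') :
    i = i' ∧ q = q' := by
  have hmem := mem_Sstr_of_mem_typeIIEntries G hi h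
  have hmem' := mem_Sstr_of_mem_typeIIEntries G hi' h'
  obtain rfl : i = i' := by
    by_contra hne
    rcases Nat.lt_or_gt_of_ne hne with hlt | hgt
    · exact notMem_Sstr_of_mem_typeIIEntries G h' (by omega) hmem
    · exact notMem_Sstr_of_mem_typeIIEntries G h (by omega) hmem'
  have hlev := (level_eq_of_mem_Sstr G (by omega) hmem).1
  have hlev' := (level_eq_of_mem_Sstr G (by omega) hmem').1
  simp only at hlev hlev'
  exact ⟨rfl, by omega⟩

theorem mem_map_fst_Sstr_of_mem_typeIIEntries {i m : ℕ} {v : V} {q : ℕ} (hi : 2 ≤ i)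
    (hik : i ≤ G.k + 1) (h : (v, q) ∈ typeIIEntries G i) (him : i ≤ m) (hmq : m < i + q) :
    m ≤ G.k + 1 ∧ v ∈ (Sstr G (m - 1)).map Prod.fst := by
  have hmem := mem_Sstr_of_mem_typeIIEntries G hi h
  have hlev := (level_eq_of_mem_Sstr G (by omega) hmem).1
  refine ⟨by have := G.level_le v; simp only at hlev; omega, ?_⟩
  have hshift := mem_Sstr_add G (t := m - i) (q := q - (m - i))
    (by rwa [Nat.sub_add_cancel (by omega)]) (by omega)
  rw [show i - 1 + (m - i) = m - 1 by omega] at hshift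
  exact List.mem_map.2 ⟨_, hshift, rfl⟩

end LevelStrings

open Finset in
/-- In the ROBDD-based compression scheme, the exponent sums of the Type II entries are
dominated by the total lengths of the level strings:
`∑_{i=2}^{k+1} Q_i ≤ ∑_{i=2}^{k+1} |S_i|`. -/
theorem Qsum_le_total_length (G : BDD V) :
    ∑ i ∈ Finset.Icc 2 (G.k + 1), Qsum G i
      ≤ ∑ i ∈ Finset.Icc 2 (G.k + 1), (Sstr G (i - 1)).length := by
  set I := Finset.Icc 2 (G.k + 1)
  calc ∑ i ∈ I, Qsum G i
      = #(I.sigma fun i => (typeIIEntries G i).toFinset.sigma fun p => Ico i (i + p.2)) := by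
        simp [card_sigma, Qsum_eq_sum_toFinset]
    _ ≤ #(I.sigma fun i => ((Sstr G (i - 1)).map Prod.fst).toFinset) := by
        refine card_le_card_of_injOn (fun x => ⟨x.2.2, x.2.1.1⟩) ?_ ?_
        · rintro ⟨i, ⟨v, q⟩, m⟩ hx
          simp only [I, coe_sigma, Set.mem_sigma_iff, mem_coe, mem_Icc, List.mem_toFinset,
            mem_Ico] at hx ⊢
          obtain ⟨⟨hi, hik⟩, hT, him, hmq⟩ := hx
          have := mem_map_fst_Sstr_of_mem_typeIIEntries G hi hik hT him hmq
          exact ⟨⟨by omega, this.1⟩, this.2⟩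
        · rintro ⟨i, ⟨v, q⟩, m⟩ hx ⟨i', ⟨v', q'⟩, m'⟩ hx' heq
          simp only [I, coe_sigma, Set.mem_sigma_iff, mem_coe, mem_Icc, List.mem_toFinset,
            Sigma.mk.injEq, heq_eq_eq] at hx hx' heq
          obtain ⟨rfl, rfl⟩ := heq
          obtain ⟨rfl, rfl⟩ := eq_of_mem_typeIIEntries G hx.1.1 hx'.1.1 hx.1.2 hx.2.1 hx'.2.1
          rfl
    _ = ∑ i ∈ I, #((Sstr G (i - 1)).map Prod.fst).toFinset := card_sigma _ _
    _ ≤ ∑ i ∈ I, (Sstr G (i - 1)).length :=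
        sum_le_sum fun i _ => (List.toFinset_card_le _).trans (List.length_map _).le
end
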